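/- Let (R, 𝔪) be a commutative local ring and F a b × a matrix with entries in R. Then there exist natural numbers r, a', b' with a = a' + r and b = b' + r, and invertible matrices P ∈ GLᵦ(R) and Q ∈ GLₐ(R), such that P · F · Q is the block-diagonal matrix with blocks the r × r identity matrix and a b' × a' matrix G all of whose entries lie in 𝔪. (This is the commutative local-ring form of the reduction of a two-term complex of vector bundles to a quasi-isomorphic complex whose differential vanishes at the closed point.) -/

import Mathlib

/-!
An entry of a matrix over a local ring that is not in `𝔪` is a unit. If every entry of `F`
lies in `𝔪` we take `r = 0`. Otherwise permute rows and columns to move a unit entry to the top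
left corner; block elimination then makes `F` equivalent to `1₁ ⊕ S` with `S` the Schur
complement of that corner, and induction on the number of columns applied to `S` finishes.
-/

namespace Matrix

section Semiring

variable {R : Type*} [Semiring R] {m n : Type*} [Fintype m] [Fintype n] [DecidableEq m]
  [DecidableEq n]

def Equivalent (F F' : Matrix m n R) : Prop :=
  ∃ (P : (Matrix m m R)ˣ) (Q : (Matrix n n R)ˣ), (P : Matrix m m R) * F * (Q : Matrix n n R) = F'

namespace Equivalent

theorem refl (F : Matrix m n R) : Equivalent F F :=
  ⟨1, 1, by simp⟩

theorem of_isUnit {P : Matrix m m R} {Q : Matrix n n R} (hP : IsUnit P) (hQ : IsUnit Q)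
    (F : Matrix m n R) : Equivalent F (P * F * Q) :=
  ⟨hP.unit, hQ.unit, rfl⟩

theorem symm {F F' : Matrix m n R} (h : Equivalent F F') : Equivalent F' F := by
  obtain ⟨P, Q, rfl⟩ := h
  refine ⟨P⁻¹, Q⁻¹, ?_⟩
  rw [Matrix.mul_assoc, Matrix.mul_assoc, Units.mul_inv, Matrix.mul_one, ← Matrix.mul_assoc,
    Units.inv_mul, Matrix.one_mul]

theorem trans {F F' F'' : Matrix m n R} (h : Equivalent F F') (h' : Equivalent F' F'') :
    Equivalent F F'' := by
  obtain ⟨P, Q, rfl⟩ := h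
  obtain ⟨P', Q', rfl⟩ := h'
  exact ⟨P' * P, Q * Q', by simp [Matrix.mul_assoc]⟩

theorem reindex {m' n' : Type*} [Fintype m'] [Fintype n'] [DecidableEq m'] [DecidableEq n']
    (e : m ≃ m') (f : n ≃ n') {F F' : Matrix m n R} (h : Equivalent F F') :
    Equivalent (reindex e f F) (reindex e f F') := by
  obtain ⟨P, Q, rfl⟩ := h
  refine ⟨Units.map (reindexRingEquiv R e).toMonoidHom P,
    Units.map (reindexRingEquiv R f).toMonoidHom Q, ?_⟩
  simp [reindex_apply, submatrix_mul_equiv]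

theorem fromBlocks_diagonal {m' n' : Type*} [Fintype m'] [Fintype n'] [DecidableEq m']
    [DecidableEq n'] {A A' : Matrix m n R} {D D' : Matrix m' n' R} (hA : Equivalent A A')
    (hD : Equivalent D D') : Equivalent (fromBlocks A 0 0 D) (fromBlocks A' 0 0 D') := by
  obtain ⟨P, Q, rfl⟩ := hA
  obtain ⟨P', Q', rfl⟩ := hD
  refine ⟨⟨fromBlocks P 0 0 P', fromBlocks ↑P⁻¹ 0 0 ↑P'⁻¹, ?_, ?_⟩,
    ⟨fromBlocks Q 0 0 Q', fromBlocks ↑Q⁻¹ 0 0 ↑Q'⁻¹, ?_, ?_⟩, ?_⟩ <;>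
    simp [fromBlocks_multiply]

end Equivalent

theorem equivalent_submatrix (F : Matrix m n R) (σ : Equiv.Perm m) (τ : Equiv.Perm n) :
    Equivalent F (F.submatrix σ τ) := by
  have h := Equivalent.of_isUnit ((Group.isUnit σ⁻¹).map (permMatrixHom (n := m) (R := R)))
    ((Group.isUnit τ).map (permMatrixHom (n := n) (R := R))) F
  simpa [Equiv.Perm.permMatrix, PEquiv.toMatrix_toPEquiv_mul, PEquiv.mul_toMatrix_toPEquiv,
    Equiv.Perm.inv_def] using h

end Semiring

theorem equivalent_fromBlocks_one_schur {R : Type*} [CommRing R] {l m n : Type*} [Fintype l]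
    [Fintype m] [Fintype n] [DecidableEq l] [DecidableEq m] [DecidableEq n] (A : Matrix m m R)
    (B : Matrix m n R) (C : Matrix l m R) (D : Matrix l n R) [Invertible A] :
    Equivalent (fromBlocks A B C D) (fromBlocks (1 : Matrix m m R) 0 0 (D - C * ⅟A * B)) := by
  have hLDU : Equivalent (fromBlocks A 0 0 (D - C * ⅟A * B)) (fromBlocks A B C D) := by
    rw [fromBlocks_eq_of_invertible₁₁ A B C D]
    exact .of_isUnit (by simp) (by simp) _
  have hA : Equivalent A 1 := by
    simpa using Equivalent.of_isUnit (isUnit_of_invertible (⅟A)) isUnit_one A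
  exact hLDU.symm.trans (hA.fromBlocks_diagonal (.refl _))

section OneDirectSum

variable {R : Type*} [Semiring R]

def oneDirectSum {a b r a' b' : ℕ} (hb : b = r + b') (ha : a = r + a')
    (G : Matrix (Fin b') (Fin a') R) : Matrix (Fin b) (Fin a) R :=
  reindex (finSumFinEquiv.trans (finCongr hb.symm)) (finSumFinEquiv.trans (finCongr ha.symm))
    (fromBlocks (1 : Matrix (Fin r) (Fin r) R) 0 0 G)

theorem oneDirectSum_apply {a b r a' b' : ℕ} (hb : b = r + b') (ha : a = r + a')
    (G : Matrix (Fin b') (Fin a') R) (i : Fin b) (j : Fin a) :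
    oneDirectSum hb ha G i j =
      if h : (i : ℕ) < r ∨ (j : ℕ) < r then (if (i : ℕ) = j then 1 else 0)
      else G ⟨i - r, by omega⟩ ⟨j - r, by omega⟩ := by
  subst hb ha
  induction i using Fin.addCases <;> induction j using Fin.addCases <;>
    simp [oneDirectSum, one_apply, Fin.ext_iff] <;> omega

theorem oneDirectSum_zero_add {a b : ℕ} (G : Matrix (Fin b) (Fin a) R) :
    oneDirectSum (Nat.zero_add b).symm (Nat.zero_add a).symm G = G := by
  ext i j
  simp [oneDirectSum_apply]

theorem oneDirectSum_oneDirectSum {a b s t a₁ b₁ a' b' : ℕ} (hb : b = s + b₁) (ha : a = s + a₁)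
    (hb₁ : b₁ = t + b') (ha₁ : a₁ = t + a') (G : Matrix (Fin b') (Fin a') R) :
    oneDirectSum hb ha (oneDirectSum hb₁ ha₁ G) =
      oneDirectSum (b := b) (a := a) (r := s + t) (by omega) (by omega) G := by
  ext i j
  simp only [oneDirectSum_apply]
  split_ifs <;> first | rfl | omega | (congr 1 <;> ext <;> simp <;> omega)

theorem Equivalent.oneDirectSum {a b r a' b' : ℕ} (hb : b = r + b') (ha : a = r + a')
    {G G' : Matrix (Fin b') (Fin a') R} (h : Equivalent G G') :
    Equivalent (oneDirectSum hb ha G) (oneDirectSum hb ha G') :=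
  ((Equivalent.refl _).fromBlocks_diagonal h).reindex _ _

end OneDirectSum

theorem exists_equivalent_oneDirectSum_of_isUnit {R : Type*} [CommRing R] {a b : ℕ}
    (F : Matrix (Fin b) (Fin a) R) {i : Fin b} {j : Fin a} (hij : IsUnit (F i j)) :
    ∃ (a' b' : ℕ) (ha : a = 1 + a') (hb : b = 1 + b') (S : Matrix (Fin b') (Fin a') R),
      Equivalent F (oneDirectSum hb ha S) := by
  obtain ⟨a', rfl⟩ : ∃ a', a = 1 + a' := ⟨a - 1, by have := j.isLt; omega⟩
  obtain ⟨b', rfl⟩ : ∃ b', b = 1 + b' := ⟨b - 1, by have := i.isLt; omega⟩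
  -- the reindexings used by `oneDirectSum rfl rfl`
  let eb : Fin 1 ⊕ Fin b' ≃ Fin (1 + b') := finSumFinEquiv.trans (finCongr rfl)
  let ea : Fin 1 ⊕ Fin a' ≃ Fin (1 + a') := finSumFinEquiv.trans (finCongr rfl)
  let M := reindex eb.symm ea.symm (F.submatrix (Equiv.swap 0 i) (Equiv.swap 0 j))
  have : Invertible M.toBlocks₁₁ := by
    refine ((isUnit_iff_isUnit_det _).2 ?_).invertible
    have h0 (k : ℕ) : Fin.castAdd k (0 : Fin 1) = 0 := rfl
    simpa [det_unique, M, eb, ea, toBlocks₁₁, h0] using hij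
  have hM := equivalent_fromBlocks_one_schur M.toBlocks₁₁ M.toBlocks₁₂ M.toBlocks₂₁ M.toBlocks₂₂
  rw [fromBlocks_toBlocks] at hM
  have hF : reindex eb ea M = F.submatrix (Equiv.swap 0 i) (Equiv.swap 0 j) := by
    simp [M, Function.comp_assoc]
  exact ⟨a', b', rfl, rfl, _, (equivalent_submatrix F _ _).trans (hF ▸ hM.reindex eb ea)⟩

theorem exists_equivalent_oneDirectSum {R : Type*} [CommRing R] [IsLocalRing R] {a b : ℕ}
    (F : Matrix (Fin b) (Fin a) R) :
    ∃ (r a' b' : ℕ) (ha : a = r + a') (hb : b = r + b') (G : Matrix (Fin b') (Fin a') R),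
      (∀ i j, G i j ∈ IsLocalRing.maximalIdeal R) ∧ Equivalent F (oneDirectSum hb ha G) := by
  by_cases hF : ∀ i j, F i j ∈ IsLocalRing.maximalIdeal R
  · exact ⟨0, a, b, _, _, F, hF, by rw [oneDirectSum_zero_add]; exact .refl F⟩
  simp only [not_forall] at hF
  obtain ⟨i, j, hij⟩ := hF
  obtain ⟨a₁, b₁, ha, hb, S, hFS⟩ :=
    exists_equivalent_oneDirectSum_of_isUnit F (IsLocalRing.notMem_maximalIdeal.mp hij)
  obtain ⟨r, a', b', ha₁, hb₁, G, hG, hSG⟩ := exists_equivalent_oneDirectSum S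
  refine ⟨1 + r, a', b', by omega, by omega, G, hG, ?_⟩
  rw [← oneDirectSum_oneDirectSum hb ha hb₁ ha₁]
  exact hFS.trans (hSG.oneDirectSum hb ha)
termination_by a

end Matrix

theorem stmt_2 {R : Type*} [CommRing R] [IsLocalRing R] (a b : ℕ)
    (F : Matrix (Fin b) (Fin a) R) :
    ∃ (r a' b' : ℕ) (ha : a = r + a') (hb : b = r + b')
      (P : (Matrix (Fin b) (Fin b) R)ˣ) (Q : (Matrix (Fin a) (Fin a) R)ˣ)
      (G : Matrix (Fin b') (Fin a') R),
      (∀ i j, G i j ∈ IsLocalRing.maximalIdeal R) ∧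
      (P : Matrix (Fin b) (Fin b) R) * F * (Q : Matrix (Fin a) (Fin a) R) =
        Matrix.reindex (finSumFinEquiv.trans (finCongr hb.symm))
          (finSumFinEquiv.trans (finCongr ha.symm))
          (Matrix.fromBlocks (1 : Matrix (Fin r) (Fin r) R) 0 0 G) := by
  obtain ⟨r, a', b', ha, hb, G, hG, P, Q, hPQ⟩ := Matrix.exists_equivalent_oneDirectSum F
  exact ⟨r, a', b', ha, hb, P, Q, G, hG, hPQ⟩
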